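/- arXiv:2203.15597 — 3 statements merged into one kernel-verified Lean document; each statement's English description precedes it below -/
import Mathlib

section
/- With notation as in the support-vector independence test: if ⟨C̄_k, S̄_l⟩ = 1 evidences the independence of cycle C_k, then the updated vectors S̄'ⱼ = S̄ⱼ if ⟨C̄_k, S̄ⱼ⟩ = 0 and S̄'ⱼ = S̄ⱼ + S̄_l if ⟨C̄_k, S̄ⱼ⟩ = 1 (for j ≠ l) form a basis of the orthogonal complement of span{C̄₁, ..., C̄_k}. -/
open Finset
open scoped Classical

/-- The GF(2) inner product. -/
noncomputable def dotGF {ι : Type*} [Fintype ι] (x y : ι → ZMod 2) : ZMod 2 :=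
  ∑ i, x i * y i

/-- Orthogonal complement with respect to the GF(2) inner product. -/
noncomputable def orthComp {ι : Type*} [Fintype ι]
    (U : Submodule (ZMod 2) (ι → ZMod 2)) : Submodule (ZMod 2) (ι → ZMod 2) where
  carrier := {x | ∀ y ∈ U, dotGF x y = 0}
  add_mem' := by
    intro a b ha hb y hy
    have h1 := ha y hy
    have h2 := hb y hy
    simp only [dotGF] at h1 h2 ⊢
    simp [Pi.add_apply, add_mul, Finset.sum_add_distrib, h1, h2]
  zero_mem' := by
    intro y hy
    simp [dotGF]
  smul_mem' := by
    intro c a ha y hy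
    have h1 := ha y hy
    simp only [dotGF] at h1 ⊢
    simp [Pi.smul_apply, smul_eq_mul, mul_assoc, ← Finset.mul_sum, h1]

/-! Over GF(2) the updated vector is `S' j = S j - ⟨C_k, S j⟩ • S l`, the image of `S j` under the
projection `x ↦ x - ⟨C_k, x⟩ • S l` onto the kernel of `⟨C_k, ·⟩` along `S l`. This projection
kills `S l` and maps `span S` onto `span S ∩ ker ⟨C_k, ·⟩`, which is the orthogonal complement of
`span {C₁, …, C_k}`. The `S' j` stay independent because, together with `S l`, they arise from the
`S j` by adding multiples of `S l`. -/

open Submodule Set LinearMap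

section Projection

variable {R M ι : Type*} [Ring R] [AddCommGroup M] [Module R M]

theorem Submodule.map_id_sub_smulRight_eq_inf_ker {f : M →ₗ[R] R} {v : M} (hv : f v = 1)
    {W : Submodule R M} (hvW : v ∈ W) :
    W.map (LinearMap.id - f.smulRight v) = W ⊓ ker f := by
  apply le_antisymm
  · rintro _ ⟨x, hx, rfl⟩
    exact ⟨W.sub_mem hx (W.smul_mem _ hvW), by simp [hv]⟩
  · rintro x ⟨hx, hfx⟩
    exact ⟨x, hx, by simp [mem_ker.mp hfx]⟩

theorem LinearIndependent.sub_smul_of_ne {b : ι → M} (hb : LinearIndependent R b) (g : ι → R)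
    (l : ι) : LinearIndependent R (fun j : {j // j ≠ l} => b j - g j • b l) := by
  set c : ι → R := fun j => if j = l then 0 else -g j
  have hc : LinearIndependent R (b + (c · • b l)) :=
    (linearIndependent_add_smul_iff (by simp [c])).mpr hb
  convert hc.comp Subtype.val Subtype.val_injective using 1
  funext j
  simp [c, j.2, sub_eq_add_neg]

theorem span_range_sub_smul_of_ne {b : ι → M} {f : M →ₗ[R] R} {l : ι} (hl : f (b l) = 1) :
    span R (range fun j : {j // j ≠ l} => b j - f (b j) • b l) = span R (range b) ⊓ ker f := by
  set P := LinearMap.id - f.smulRight (b l)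
  have hPl : P (b l) = 0 := by simp [P, hl]
  have hrange : (range fun j : {j // j ≠ l} => b j - f (b j) • b l) = (P ∘ b) '' {l}ᶜ := by
    ext
    simp [P]
  rw [← map_id_sub_smulRight_eq_inf_ker hl (subset_span (mem_range_self l)), ← span_image,
    ← range_comp, ← insert_image_compl_eq_range _ l, ← hrange, Function.comp_apply, hPl,
    span_insert_zero]

end Projection

theorem ZMod.ite_eq_zero_add_eq_sub_smul {M : Type*} [AddCommGroup M] [Module (ZMod 2) M]
    (a : ZMod 2) (x y : M) : (if a = 0 then x else x + y) = x - a • y := by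
  obtain rfl | rfl : a = 0 ∨ a = 1 := by revert a; decide
  · simp
  · rw [if_neg one_ne_zero, sub_eq_add_neg, ← neg_smul, ZMod.neg_eq_self_mod_two, one_smul]

section Orthogonal

variable {ν : Type*} [Fintype ν]

theorem mem_orthComp_span_iff {s : Set (ν → ZMod 2)} {x : ν → ZMod 2} :
    x ∈ orthComp (span (ZMod 2) s) ↔ ∀ y ∈ s, dotGF x y = 0 := by
  change span (ZMod 2) s ≤ ker (dotProductBilin (ZMod 2) (ZMod 2) x) ↔ _
  rw [span_le]
  rfl

theorem orthComp_span_union_singleton (s : Set (ν → ZMod 2)) (c : ν → ZMod 2) :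
    orthComp (span (ZMod 2) (s ∪ {c})) =
      orthComp (span (ZMod 2) s) ⊓ ker (dotProductBilin (ZMod 2) (ZMod 2) c) := by
  ext x
  simp [mem_orthComp_span_iff, dotGF, dotProduct, mul_comm, and_comm]

end Orthogonal

theorem support_vector_update_general {n : Type*} [Fintype n]
    {k : ℕ} (C : Fin k → (n → ZMod 2)) (Ck : n → ZMod 2)
    {ι : Type*} (S : ι → (n → ZMod 2))
    (hSind : LinearIndependent (ZMod 2) S)
    (hSspan : Submodule.span (ZMod 2) (Set.range S) =
      orthComp (Submodule.span (ZMod 2) (Set.range C)))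
    (l : ι) (hl : dotGF Ck (S l) = 1) :
    LinearIndependent (ZMod 2)
        (fun j : {j : ι // j ≠ l} =>
          if dotGF Ck (S j.1) = 0 then S j.1 else S j.1 + S l) ∧
      Submodule.span (ZMod 2)
          (Set.range fun j : {j : ι // j ≠ l} =>
            if dotGF Ck (S j.1) = 0 then S j.1 else S j.1 + S l) =
        orthComp (Submodule.span (ZMod 2) (Set.range C ∪ {Ck})) := by
  set f := dotProductBilin (ZMod 2) (ZMod 2) Ck
  have hupdate : (fun j : {j : ι // j ≠ l} =>
      if dotGF Ck (S j.1) = 0 then S j.1 else S j.1 + S l) = fun j => S j.1 - f (S j.1) • S l :=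
    funext fun _ => ZMod.ite_eq_zero_add_eq_sub_smul _ _ _
  rw [hupdate, orthComp_span_union_singleton, ← hSspan]
  exact ⟨hSind.sub_smul_of_ne (fun j => f (S j)) l, span_range_sub_smul_of_ne (f := f) hl⟩

/-- Support-vector update: vectors over GF(2)^ν.  `C₁, …, C_{k-1}` are linearly
independent, `{S j}` is a basis of the orthogonal complement of their span, and
`S l` satisfies `⟨C_k, S l⟩ = 1` (evidencing the independence of `C_k`).  Then the
updated vectors `S' j = S j` if `⟨C_k, S j⟩ = 0`, and `S' j = S j + S l` if
`⟨C_k, S j⟩ = 1` (for `j ≠ l`), form a basis of the orthogonal complement of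
`span{C₁, …, C_k}`. -/
theorem support_vector_update {n : Type*} [Fintype n]
    {k : ℕ} (C : Fin k → (n → ZMod 2)) (Ck : n → ZMod 2)
    (hC : LinearIndependent (ZMod 2) C)
    {ι : Type*} [Fintype ι] (S : ι → (n → ZMod 2))
    (hSind : LinearIndependent (ZMod 2) S)
    (hSspan : Submodule.span (ZMod 2) (Set.range S) =
      orthComp (Submodule.span (ZMod 2) (Set.range C)))
    (l : ι) (hl : dotGF Ck (S l) = 1) :
    LinearIndependent (ZMod 2)
        (fun j : {j : ι // j ≠ l} =>
          if dotGF Ck (S j.1) = 0 then S j.1 else S j.1 + S l) ∧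
      Submodule.span (ZMod 2)
          (Set.range fun j : {j : ι // j ≠ l} =>
            if dotGF Ck (S j.1) = 0 then S j.1 else S j.1 + S l) =
        orthComp (Submodule.span (ZMod 2) (Set.range C ∪ {Ck})) :=
  support_vector_update_general C Ck S hSind hSspan l hl
end

section
/- (Horton's lemma) Let C be a cycle belonging to some minimum-weight cycle basis of a graph G with positive edge weights, and let u, v be two vertices lying on C. Then C contains a shortest path from u to v. -/
/-!
Exchange argument: if `C` lies in a minimum cycle basis `B` and `S`, `C ∆ S` are cycles both
lighter than `C`, then one of them lies outside the span of `B \ {C}` and can replace `C`,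
giving a lighter cycle basis. Hence `C` is connected (else split it into the component of `u` and
the rest), so it contains `u`–`v` paths; let `P` be a lightest one. The edges of `C ∆ P` have odd
degree exactly at `u` and `v`, so they contain another `u`–`v` path and `w(P) ≤ w(C ∆ P)`. A path
`Q` lighter than `P` would make both `P ∆ Q` and `C ∆ (P ∆ Q)` lighter than
`w(C) = w(P) + w(C ∆ P)`.
-/

open Finset
open scoped Classical

variable {V : Type*}

/-- An edge set of a graph `G` in which every vertex has even degree (a cycle). -/
def IsCycleEdgeSet (G : SimpleGraph V) (s : Finset (Sym2 V)) : Prop :=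
  ↑s ⊆ G.edgeSet ∧ ∀ v : V, Even (s.filter (fun e => v ∈ e)).card

/-- GF(2) incidence vector of an edge set. -/
noncomputable def indicVec (s : Finset (Sym2 V)) : Sym2 V → ZMod 2 :=
  fun e => if e ∈ s then 1 else 0

/-- The cycle space of `G` over GF(2). -/
noncomputable def cycleSpace (G : SimpleGraph V) : Submodule (ZMod 2) (Sym2 V → ZMod 2) :=
  Submodule.span (ZMod 2) {x | ∃ s : Finset (Sym2 V), IsCycleEdgeSet G s ∧ x = indicVec s}

/-- Total weight of an edge set. -/
noncomputable def esWeight (w : Sym2 V → ℝ) (s : Finset (Sym2 V)) : ℝ :=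
  ∑ e ∈ s, w e

/-- A cycle basis of `G`: a set of cycles whose GF(2) incidence vectors are linearly
independent and span the cycle space. -/
def IsCycleBasis (G : SimpleGraph V) (B : Finset (Finset (Sym2 V))) : Prop :=
  (∀ c ∈ B, IsCycleEdgeSet G c) ∧
    LinearIndependent (ZMod 2) (fun c : B => indicVec (c : Finset (Sym2 V))) ∧
    Submodule.span (ZMod 2)
        (Set.range fun c : B => indicVec (c : Finset (Sym2 V))) = cycleSpace G

/-- A minimum cycle basis: a cycle basis of minimum total weight. -/
def IsMinCycleBasis (G : SimpleGraph V) (w : Sym2 V → ℝ)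
    (B : Finset (Finset (Sym2 V))) : Prop :=
  IsCycleBasis G B ∧
    ∀ B', IsCycleBasis G B' → ∑ c ∈ B, esWeight w c ≤ ∑ c ∈ B', esWeight w c

/-- Weight of a walk. -/
noncomputable def walkWeight (w : Sym2 V → ℝ) {G : SimpleGraph V} {u v : V}
    (p : G.Walk u v) : ℝ :=
  (p.edges.map w).sum

open scoped symmDiff

lemma Finset.sum_symmDiff_add_two_nsmul {α M : Type*} [DecidableEq α] [AddCommMonoid M]
    (s t : Finset α) (f : α → M) :
    ∑ x ∈ s ∆ t, f x + 2 • ∑ x ∈ s ∩ t, f x = ∑ x ∈ s, f x + ∑ x ∈ t, f x := by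
  have hd : Disjoint (s ∆ t) (s ∩ t) := disjoint_symmDiff_inf s t
  rw [← Finset.sum_union_inter, two_nsmul, ← add_assoc, ← Finset.sum_union hd]
  rw [show s ∆ t ∪ s ∩ t = s ∪ t from symmDiff_sup_inf s t]

lemma Finset.coe_symmDiff_subset {α : Type*} [DecidableEq α] {s t : Finset α} {S : Set α}
    (hs : ↑s ⊆ S) (ht : ↑t ⊆ S) : ↑(s ∆ t) ⊆ S := by
  rw [Finset.coe_symmDiff]
  exact Set.symmDiff_subset_union.trans (Set.union_subset hs ht)

lemma SimpleGraph.Walk.coe_edges_toFinset_subset {G : SimpleGraph V} {u v : V}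
    (p : G.Walk u v) : ↑p.edges.toFinset ⊆ G.edgeSet := fun _ he =>
  p.edges_subset_edgeSet (List.mem_toFinset.1 he)

lemma esWeight_symmDiff_le {w : Sym2 V → ℝ} {s t : Finset (Sym2 V)}
    (hw : ∀ e ∈ s ∩ t, 0 ≤ w e) : esWeight w (s ∆ t) ≤ esWeight w s + esWeight w t := by
  have h := Finset.sum_symmDiff_add_two_nsmul s t w
  have h₀ : 0 ≤ ∑ e ∈ s ∩ t, w e := Finset.sum_nonneg hw
  rw [nsmul_eq_mul] at h
  unfold esWeight
  push_cast at h
  linarith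

lemma esWeight_symmDiff_add_of_subset (w : Sym2 V → ℝ) {s t : Finset (Sym2 V)} (h : t ⊆ s) :
    esWeight w (s ∆ t) + esWeight w t = esWeight w s := by
  rw [symmDiff_of_ge h]
  exact Finset.sum_sdiff h

lemma walkWeight_eq_esWeight (w : Sym2 V → ℝ) {G : SimpleGraph V} {u v : V} {p : G.Walk u v}
    (hp : p.IsTrail) : walkWeight w p = esWeight w p.edges.toFinset :=
  (List.sum_toFinset w hp.edges_nodup).symm

lemma exists_isPath_forall_walkWeight_le [Fintype V] (w : Sym2 V → ℝ) {G : SimpleGraph V}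
    {S : Set (Sym2 V)} {u v : V} {p₀ : G.Walk u v} (hp₀ : p₀.IsPath)
    (hp₀S : ∀ e ∈ p₀.edges, e ∈ S) :
    ∃ p : G.Walk u v, p.IsPath ∧ (∀ e ∈ p.edges, e ∈ S) ∧
      ∀ p' : G.Walk u v, p'.IsPath → (∀ e ∈ p'.edges, e ∈ S) →
        walkWeight w p ≤ walkWeight w p' := by
  obtain ⟨p, hpS, hmin⟩ := Finset.exists_min_image
    (Finset.univ.filter fun p : G.Path u v => ∀ e ∈ (p : G.Walk u v).edges, e ∈ S)
    (fun p => walkWeight w (p : G.Walk u v)) ⟨⟨p₀, hp₀⟩, by simpa using hp₀S⟩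
  refine ⟨p, p.2, (Finset.mem_filter.1 hpS).2, fun p' hp' hp'S => ?_⟩
  exact hmin ⟨p', hp'⟩ (by simpa using hp'S)

noncomputable def boundary (s : Finset (Sym2 V)) (x : V) : ZMod 2 :=
  (s.filter (fun e => x ∈ e)).card

lemma isCycleEdgeSet_iff_boundary_eq_zero {G : SimpleGraph V} {s : Finset (Sym2 V)} :
    IsCycleEdgeSet G s ↔ ↑s ⊆ G.edgeSet ∧ boundary s = 0 := by
  simp only [IsCycleEdgeSet, boundary, funext_iff, Pi.zero_apply, ZMod.natCast_eq_zero_iff_even]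

lemma boundary_symmDiff (s t : Finset (Sym2 V)) :
    boundary (s ∆ t) = boundary s + boundary t := by
  ext x
  have h := Finset.sum_symmDiff_add_two_nsmul s t (fun e => if x ∈ e then (1 : ZMod 2) else 0)
  rw [CharTwo.two_nsmul, add_zero] at h
  simpa only [boundary, Pi.add_apply, Finset.natCast_card_filter] using h

lemma boundary_edges_toFinset {G : SimpleGraph V} {u v : V} {p : G.Walk u v} (hp : p.IsTrail) :
    boundary p.edges.toFinset = Pi.single u 1 + Pi.single v 1 := by
  ext x
  have h := hp.even_countP_edges_iff x
  have hc : boundary p.edges.toFinset x = (p.edges.countP fun e => x ∈ e : ℕ) := by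
    rw [boundary, List.countP_eq_length_filter,
      ← List.toFinset_card_of_nodup (hp.edges_nodup.filter _), List.toFinset_filter]
    simp
  rw [hc]
  generalize p.edges.countP (fun e => x ∈ e) = n at h
  obtain hn | hn := Nat.even_or_odd n
  · rw [ZMod.natCast_eq_zero_iff_even.2 hn]
    by_cases hxu : x = u <;> by_cases hxv : x = v <;> simp_all [CharTwo.add_self_eq_zero]
  · rw [ZMod.natCast_eq_one_iff_odd.2 hn]
    replace h := h.not.1 (Nat.not_even_iff_odd.2 hn)
    by_cases hxu : x = u <;> by_cases hxv : x = v <;> simp_all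

lemma sum_boundary_eq_zero [Fintype V] {S : Finset (Sym2 V)} (hS : ∀ e ∈ S, ¬e.IsDiag) :
    ∑ x, boundary S x = 0 := by
  simp only [boundary, Finset.natCast_card_filter]
  rw [Finset.sum_comm]
  refine Finset.sum_eq_zero fun e he => ?_
  have he2 : Finset.univ.filter (fun x => x ∈ e) = e.toFinset := by ext; simp
  rw [← Finset.natCast_card_filter, he2, Sym2.card_toFinset_of_not_isDiag e (hS e he)]
  rfl

noncomputable def componentEdges (S : Finset (Sym2 V)) (u : V) : Finset (Sym2 V) :=
  S.filter (fun e => ∃ y ∈ e, (SimpleGraph.fromEdgeSet (S : Set (Sym2 V))).Reachable u y)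

lemma mem_componentEdges {S : Finset (Sym2 V)} {u : V} {e : Sym2 V} :
    e ∈ componentEdges S u ↔
      e ∈ S ∧ ∃ y ∈ e, (SimpleGraph.fromEdgeSet (S : Set (Sym2 V))).Reachable u y :=
  Finset.mem_filter

lemma componentEdges_subset (S : Finset (Sym2 V)) (u : V) : componentEdges S u ⊆ S :=
  Finset.filter_subset _ _

lemma reachable_of_mem_of_mem {S : Finset (Sym2 V)} {e : Sym2 V} (he : e ∈ S) {u x y : V}
    (hx : x ∈ e) (hy : y ∈ e) (h : (SimpleGraph.fromEdgeSet (S : Set (Sym2 V))).Reachable u y) :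
    (SimpleGraph.fromEdgeSet (S : Set (Sym2 V))).Reachable u x := by
  obtain rfl | hyx := eq_or_ne y x
  · exact h
  refine h.trans (SimpleGraph.Adj.reachable ?_)
  rw [SimpleGraph.fromEdgeSet_adj, ← (Sym2.mem_and_mem_iff hyx).1 ⟨hy, hx⟩]
  exact ⟨he, hyx⟩

lemma boundary_componentEdges (S : Finset (Sym2 V)) (u x : V) :
    boundary (componentEdges S u) x =
      if (SimpleGraph.fromEdgeSet (S : Set (Sym2 V))).Reachable u x then boundary S x else 0 := by
  unfold boundary componentEdges
  rw [Finset.filter_filter]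
  split_ifs with hx
  · rw [Finset.filter_congr fun e _ => and_iff_right_of_imp fun hxe => ⟨x, hxe, hx⟩]
  · rw [Finset.filter_false_of_mem, Finset.card_empty, Nat.cast_zero]
    rintro e he ⟨⟨y, hy, hr⟩, hxe⟩
    exact hx (reachable_of_mem_of_mem he hxe hy hr)

lemma reachable_of_boundary_eq [Fintype V] {S : Finset (Sym2 V)} (hS : ∀ e ∈ S, ¬e.IsDiag)
    {u v : V} (h : boundary S = Pi.single u 1 + Pi.single v 1) :
    (SimpleGraph.fromEdgeSet (S : Set (Sym2 V))).Reachable u v := by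
  by_contra huv
  have hne : u ≠ v := by rintro rfl; exact huv .rfl
  have hsum := sum_boundary_eq_zero fun e he => hS e (componentEdges_subset S u he)
  rw [Finset.sum_eq_single u] at hsum
  · simp [boundary_componentEdges, h, hne] at hsum
  · intro x _ hxu
    rw [boundary_componentEdges, h]
    split_ifs with hx
    · simp [hxu, show x ≠ v by rintro rfl; exact huv hx]
    · rfl
  · simp

lemma exists_isPath_of_reachable_fromEdgeSet {G : SimpleGraph V} {S : Set (Sym2 V)}
    (hS : S ⊆ G.edgeSet) {u v : V} (h : (SimpleGraph.fromEdgeSet S).Reachable u v) :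
    ∃ p : G.Walk u v, p.IsPath ∧ ∀ e ∈ p.edges, e ∈ S := by
  have hle : SimpleGraph.fromEdgeSet S ≤ G :=
    (SimpleGraph.fromEdgeSet_mono hS).trans_eq (SimpleGraph.fromEdgeSet_edgeSet G)
  obtain ⟨p, hp⟩ := h.some.toPath
  refine ⟨p.mapLe hle, (SimpleGraph.Walk.isPath_mapLe hle).2 hp, fun e he => ?_⟩
  rw [SimpleGraph.Walk.edges_mapLe_eq_edges] at he
  exact (SimpleGraph.edgeSet_fromEdgeSet S ▸ p.edges_subset_edgeSet he).1

lemma isCycleEdgeSet_symmDiff_edges {G : SimpleGraph V} {u v : V} {p q : G.Walk u v}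
    (hp : p.IsTrail) (hq : q.IsTrail) :
    IsCycleEdgeSet G (p.edges.toFinset ∆ q.edges.toFinset) := by
  rw [isCycleEdgeSet_iff_boundary_eq_zero, boundary_symmDiff, boundary_edges_toFinset hp,
    boundary_edges_toFinset hq]
  exact ⟨Finset.coe_symmDiff_subset p.coe_edges_toFinset_subset q.coe_edges_toFinset_subset,
    funext fun x => CharTwo.add_self_eq_zero ((Pi.single u 1 + Pi.single v 1 : V → ZMod 2) x)⟩

namespace IsCycleEdgeSet

variable {G : SimpleGraph V} {s t : Finset (Sym2 V)}

protected lemma symmDiff (hs : IsCycleEdgeSet G s) (ht : IsCycleEdgeSet G t) :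
    IsCycleEdgeSet G (s ∆ t) := by
  rw [isCycleEdgeSet_iff_boundary_eq_zero] at hs ht ⊢
  rw [boundary_symmDiff, hs.2, ht.2, add_zero]
  exact ⟨Finset.coe_symmDiff_subset hs.1 ht.1, rfl⟩

lemma exists_isPath_symmDiff_edges [Fintype V] (hs : IsCycleEdgeSet G s) {u v : V}
    {p : G.Walk u v} (hp : p.IsTrail) :
    ∃ q : G.Walk u v, q.IsPath ∧ ∀ e ∈ q.edges, e ∈ s ∆ p.edges.toFinset := by
  rw [isCycleEdgeSet_iff_boundary_eq_zero] at hs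
  have hsub := Finset.coe_symmDiff_subset hs.1 p.coe_edges_toFinset_subset
  refine exists_isPath_of_reachable_fromEdgeSet hsub (reachable_of_boundary_eq
    (fun e he => G.not_isDiag_of_mem_edgeSet (hsub he)) ?_)
  rw [boundary_symmDiff, hs.2, boundary_edges_toFinset hp, zero_add]

end IsCycleEdgeSet

lemma indicVec_symmDiff (s t : Finset (Sym2 V)) :
    indicVec (s ∆ t) = indicVec s + indicVec t := by
  ext e
  by_cases hs : e ∈ s <;> by_cases ht : e ∈ t <;>
    simp [indicVec, Finset.mem_symmDiff, hs, ht, CharTwo.add_self_eq_zero]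

lemma indicVec_mem_cycleSpace {G : SimpleGraph V} {s : Finset (Sym2 V)}
    (hs : IsCycleEdgeSet G s) : indicVec s ∈ cycleSpace G :=
  Submodule.subset_span ⟨s, hs, rfl⟩

namespace IsCycleBasis

variable {G : SimpleGraph V} {B : Finset (Finset (Sym2 V))}

lemma span_image_eq (hB : IsCycleBasis G B) :
    Submodule.span (ZMod 2) (indicVec '' (B : Set (Finset (Sym2 V)))) = cycleSpace G := by
  rw [Set.image_eq_range]
  exact hB.2.2

lemma linearIndepOn_erase (hB : IsCycleBasis G B) (C : Finset (Sym2 V)) :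
    LinearIndepOn (ZMod 2) indicVec (B.erase C : Set (Finset (Sym2 V))) :=
  LinearIndepOn.mono hB.2.1 (Finset.coe_subset.2 (Finset.erase_subset C B))

lemma indicVec_notMem_span_erase (hB : IsCycleBasis G B) {C : Finset (Sym2 V)} (hC : C ∈ B) :
    indicVec C ∉ Submodule.span (ZMod 2) (indicVec '' ↑(B.erase C)) := by
  rw [(hB.linearIndepOn_erase C).notMem_span_iff, ← Finset.coe_insert, Finset.insert_erase hC]
  exact ⟨hB.2.1, Finset.notMem_erase C B⟩

lemma exchange (hB : IsCycleBasis G B) {C S : Finset (Sym2 V)} (hC : C ∈ B)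
    (hS : IsCycleEdgeSet G S)
    (hSC : indicVec S ∉ Submodule.span (ZMod 2) (indicVec '' ↑(B.erase C))) :
    IsCycleBasis G (insert S (B.erase C)) := by
  have hcyc : ∀ c ∈ insert S (B.erase C), IsCycleEdgeSet G c := by
    intro c hc
    obtain rfl | hc := Finset.mem_insert.1 hc
    · exact hS
    · exact hB.1 c (Finset.mem_of_mem_erase hc)
  have himage : indicVec '' ↑(insert S (B.erase C)) =
      insert (indicVec S) (indicVec '' ↑(B.erase C)) := by
    rw [Finset.coe_insert, Set.image_insert_eq]
  have hC_mem : indicVec C ∈ Submodule.span (ZMod 2) (indicVec '' ↑(insert S (B.erase C))) := by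
    refine himage ▸ mem_span_insert_exchange ?_ hSC
    rw [← Set.image_insert_eq, ← Finset.coe_insert, Finset.insert_erase hC, hB.span_image_eq]
    exact indicVec_mem_cycleSpace hS
  have hspan : Submodule.span (ZMod 2) (indicVec '' ↑(insert S (B.erase C))) = cycleSpace G := by
    refine le_antisymm (Submodule.span_le.2 ?_) (hB.span_image_eq ▸ Submodule.span_le.2 ?_)
    · rintro _ ⟨c, hc, rfl⟩
      exact indicVec_mem_cycleSpace (hcyc c hc)
    · rintro _ ⟨c, hc, rfl⟩
      obtain rfl | hcC := eq_or_ne c C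
      · exact hC_mem
      · exact Submodule.subset_span ⟨c, by simp [hc, hcC], rfl⟩
  have hind := (hB.linearIndepOn_erase C).insert hSC
  rw [← Finset.coe_insert] at hind
  rw [Set.image_eq_range] at hspan
  exact ⟨hcyc, hind, hspan⟩

end IsCycleBasis

namespace IsMinCycleBasis

variable {G : SimpleGraph V} {w : Sym2 V → ℝ} {B : Finset (Finset (Sym2 V))}
  {C : Finset (Sym2 V)}

lemma esWeight_le (hB : IsMinCycleBasis G w B) (hC : C ∈ B) {S : Finset (Sym2 V)}
    (hS : IsCycleEdgeSet G S)
    (hSC : indicVec S ∉ Submodule.span (ZMod 2) (indicVec '' ↑(B.erase C))) :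
    esWeight w C ≤ esWeight w S := by
  have hSB : S ∉ B.erase C := fun h => hSC (Submodule.subset_span ⟨S, h, rfl⟩)
  have h := hB.2 _ (hB.1.exchange hC hS hSC)
  rw [Finset.sum_insert hSB, ← Finset.add_sum_erase B _ hC] at h
  linarith

lemma esWeight_le_max (hB : IsMinCycleBasis G w B) (hC : C ∈ B) {S : Finset (Sym2 V)}
    (hS : IsCycleEdgeSet G S) : esWeight w C ≤ max (esWeight w S) (esWeight w (C ∆ S)) := by
  by_cases hS' : indicVec S ∈ Submodule.span (ZMod 2) (indicVec '' ↑(B.erase C))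
  · refine le_max_of_le_right (hB.esWeight_le hC ((hB.1.1 C hC).symmDiff hS) fun hCS => ?_)
    have hsum : indicVec C = indicVec (C ∆ S) + indicVec S := by
      rw [← indicVec_symmDiff, symmDiff_symmDiff_cancel_right]
    exact hB.1.indicVec_notMem_span_erase hC (hsum ▸ add_mem hCS hS')
  · exact le_max_of_le_left (hB.esWeight_le hC hS hS')

lemma reachable_of_mem [Fintype V] (hB : IsMinCycleBasis G w B) (hw : ∀ e ∈ G.edgeSet, 0 < w e)
    (hC : C ∈ B) {u v : V} (hu : ∃ e ∈ C, u ∈ e) (hv : ∃ e ∈ C, v ∈ e) :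
    (SimpleGraph.fromEdgeSet (C : Set (Sym2 V))).Reachable u v := by
  by_contra huv
  have hCcyc := hB.1.1 C hC
  set K := componentEdges C u
  have hKC : K ⊆ C := componentEdges_subset C u
  have hK : IsCycleEdgeSet G K := by
    rw [isCycleEdgeSet_iff_boundary_eq_zero] at hCcyc ⊢
    refine ⟨(Finset.coe_subset.2 hKC).trans hCcyc.1, funext fun x => ?_⟩
    rw [boundary_componentEdges, hCcyc.2]
    exact ite_self 0
  have hpos : ∀ S ⊆ C, S.Nonempty → 0 < esWeight w S := fun S hS hne =>
    Finset.sum_pos (fun e he => hw e (hCcyc.1 (hS he))) hne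
  have hKpos : 0 < esWeight w K := by
    obtain ⟨e, he, hue⟩ := hu
    exact hpos K hKC ⟨e, mem_componentEdges.2 ⟨he, u, hue, .rfl⟩⟩
  have hCKpos : 0 < esWeight w (C ∆ K) := by
    obtain ⟨e, he, hve⟩ := hv
    refine hpos _ (symmDiff_of_ge hKC ▸ Finset.sdiff_subset) ⟨e, ?_⟩
    rw [symmDiff_of_ge hKC, Finset.mem_sdiff, mem_componentEdges]
    refine ⟨he, ?_⟩
    rintro ⟨-, y, hy, hr⟩
    exact huv (reachable_of_mem_of_mem he hve hy hr)
  have hsplit := esWeight_symmDiff_add_of_subset w hKC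
  rcases le_max_iff.1 (hB.esWeight_le_max hC hK) with h | h <;> linarith

lemma walkWeight_le [Fintype V] (hB : IsMinCycleBasis G w B) (hw : ∀ e ∈ G.edgeSet, 0 ≤ w e)
    (hC : C ∈ B) {u v : V} {p : G.Walk u v} (hp : p.IsTrail) (hpC : ∀ e ∈ p.edges, e ∈ C)
    (hmin : ∀ p' : G.Walk u v, p'.IsPath → (∀ e ∈ p'.edges, e ∈ C) →
      walkWeight w p ≤ walkWeight w p')
    {q : G.Walk u v} (hq : q.IsTrail) : walkWeight w p ≤ walkWeight w q := by
  by_contra! hlt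
  have hCcyc := hB.1.1 C hC
  set P := p.edges.toFinset
  set Q := q.edges.toFinset
  have hPC : P ⊆ C := fun e he => hpC e (List.mem_toFinset.1 he)
  have hDC : C ∆ P ⊆ C := symmDiff_of_ge hPC ▸ Finset.sdiff_subset
  obtain ⟨p', hp', hp'D⟩ := hCcyc.exists_isPath_symmDiff_edges hp
  have hD : walkWeight w p ≤ esWeight w (C ∆ P) := by
    refine (hmin p' hp' fun e he => hDC (hp'D e he)).trans ?_
    rw [walkWeight_eq_esWeight w hp'.isTrail]
    exact Finset.sum_le_sum_of_subset_of_nonneg (fun e he => hp'D e (List.mem_toFinset.1 he))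
      fun e he _ => hw e (hCcyc.1 (hDC he))
  have hsplit := esWeight_symmDiff_add_of_subset w hPC
  have h₁ : esWeight w (P ∆ Q) ≤ esWeight w P + esWeight w Q := esWeight_symmDiff_le
    fun e he => hw e (p.coe_edges_toFinset_subset (Finset.mem_of_mem_inter_left he))
  have h₂ : esWeight w (C ∆ (P ∆ Q)) ≤ esWeight w (C ∆ P) + esWeight w Q := by
    rw [← symmDiff_assoc]
    exact esWeight_symmDiff_le
      fun e he => hw e (q.coe_edges_toFinset_subset (Finset.mem_of_mem_inter_right he))
  rw [walkWeight_eq_esWeight w hp, walkWeight_eq_esWeight w hq] at hlt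
  rw [walkWeight_eq_esWeight w hp] at hD
  rcases le_max_iff.1 (hB.esWeight_le_max hC (isCycleEdgeSet_symmDiff_edges hp hq)) with h | h <;>
    linarith

end IsMinCycleBasis

/-- Horton's lemma: if `C` is a cycle in a minimum cycle basis of a graph with
positive edge weights and `u`, `v` are two vertices lying on `C`, then `C` contains
a shortest path from `u` to `v`, i.e. a path within `C` achieving the minimum
weight among all `u`–`v` paths in `G`. -/
theorem horton_lemma [Fintype V] (G : SimpleGraph V) (w : Sym2 V → ℝ)
    (hw : ∀ e ∈ G.edgeSet, 0 < w e)
    (B : Finset (Finset (Sym2 V))) (hB : IsMinCycleBasis G w B)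
    (C : Finset (Sym2 V)) (hC : C ∈ B)
    (u v : V) (hu : ∃ e ∈ C, u ∈ e) (hv : ∃ e ∈ C, v ∈ e) :
    ∃ p : G.Walk u v, p.IsPath ∧ (∀ e ∈ p.edges, e ∈ C) ∧
      ∀ q : G.Walk u v, q.IsPath → walkWeight w p ≤ walkWeight w q := by
  obtain ⟨p₀, hp₀, hp₀C⟩ :=
    exists_isPath_of_reachable_fromEdgeSet (hB.1.1 C hC).1 (hB.reachable_of_mem hw hC hu hv)
  obtain ⟨p, hp, hpC, hmin⟩ := exists_isPath_forall_walkWeight_le w hp₀ hp₀C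
  exact ⟨p, hp, hpC, fun q hq =>
    hB.walkWeight_le (fun e he => (hw e he).le) hC hp.isTrail hpC hmin hq.isTrail⟩
end

section
/- In the exchange graph G† of cycle representations, where an arc connects representation C(x, e_uv) to an equivalent representation according to the switching rules of Lemma on isometric circuits, every arc is mutual: if there is an arc from representation R to representation R', then there is an arc from R' to R. -/
open Finset
open scoped Classical

variable {V : Type*}

variable (G : SimpleGraph V) (P : ∀ u v : V, G.Walk u v)

/-- `sfun G P x u` is the first vertex (after `x`) on the chosen shortest path from
`x` to `u`. -/
def sfun (x u : V) : V := (P x u).getVert 1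

/-- The cycle `C(x, e_uv) = P_xu + P_xv + e_uv` represented by the vertex-edge pair. -/
noncomputable def repCycle (x u v : V) : Finset (Sym2 V) :=
  (P x u).edges.toFinset ∪ (P x v).edges.toFinset ∪ {s(u, v)}

/-- A valid representation `(x, e_uv)`: `e_uv` is an edge not lying on `P_xu` nor on
`P_xv`, and the two shortest paths leave `x` through different vertices (no bridge
degeneracies). -/
def ValidRep (x u v : V) : Prop :=
  G.Adj u v ∧ s(u, v) ∉ (P x u).edges ∧ s(u, v) ∉ (P x v).edges ∧
    (x ≠ u → x ≠ v → sfun G P x u ≠ sfun G P x v)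

/-- The switching rules between equivalent representations (arcs of the exchange
graph `G†`), on ordered triples `(x, u, v)`. -/
inductive Arc0 : V × V × V → V × V × V → Prop
  | rule1 (u v : V) (h : ValidRep G P u u v) :
      Arc0 (u, u, v) (v, u, v)
  | rule2a (x u v : V) (hxu : x ≠ u) (h : ValidRep G P x u v)
      (h2 : x = sfun G P (sfun G P x u) v) :
      Arc0 (x, u, v) (sfun G P x u, u, v)
  | rule2b (x u v : V) (hxu : x ≠ u) (h : ValidRep G P x u v)
      (h2 : x ≠ sfun G P (sfun G P x u) v) (h3 : u = sfun G P v (sfun G P x u)) :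
      Arc0 (x, u, v) (v, x, sfun G P x u)

/-- Arcs of the exchange graph `G†` between representations, where a representation
is a vertex together with an (unordered) edge, and either endpoint of the edge may
play the role of `u`. -/
def Arc (r r' : V × Sym2 V) : Prop :=
  ∃ u v s t : V, r.2 = s(u, v) ∧ r'.2 = s(s, t) ∧ Arc0 G P (r.1, u, v) (r'.1, s, t)


/-!
Each switching rule is undone by an instance of the same rule: rule (1) from `(v, e_vu)`,
rule (2a) from `(s_x(u), e_vu)` and rule (2b) from `(v, e_{x' x})` with `x' = s_x(u)`.
What has to be checked is that the reversed representation is again valid. Apart from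
bookkeeping with first and last edges of the chosen paths, this uses two consequences of
consistency: the last edge of `P_yv` is also the last edge of `P_xv` for every `x` on `P_yv`,
and (with positive weights) a path `P_xz` passing through `y` cannot have `P_yz` passing back
through `x` unless `x = y`.
-/

open SimpleGraph Walk

namespace ExchangeGraph

variable {G P}

section Paths

variable {x u : V}

lemma self_eq_nil (hpath : ∀ u v : V, (P u v).IsPath) (x : V) : P x x = nil :=
  eq_nil_iff_nil.mpr (isPath_iff_nil.mp (hpath x x))

lemma sfun_self (hpath : ∀ u v : V, (P u v).IsPath) (x : V) : sfun G P x x = x := by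
  rw [sfun, self_eq_nil hpath, getVert_nil]

lemma adj_sfun (hxu : x ≠ u) : G.Adj x (sfun G P x u) :=
  adj_snd (not_nil_of_ne hxu)

lemma mk_sfun_mem_edges (hxu : x ≠ u) : s(x, sfun G P x u) ∈ (P x u).edges :=
  mk_start_snd_mem_edges (not_nil_of_ne hxu)

lemma sfun_mem_support : sfun G P x u ∈ (P x u).support :=
  getVert_mem_support _ 1

lemma mem_edges_comm (hsymm : ∀ u v : V, (P u v).edges.toFinset = (P v u).edges.toFinset)
    {e : Sym2 V} : e ∈ (P x u).edges ↔ e ∈ (P u x).edges := by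
  rw [← List.mem_toFinset, hsymm, List.mem_toFinset]

lemma mem_edges_of_mem_support
    (hcons : ∀ u v x y : V, x ∈ (P u v).support → y ∈ (P u v).support →
      (P x y).edges.toFinset ⊆ (P u v).edges.toFinset)
    {y v : V} {e : Sym2 V} (hx : x ∈ (P u v).support) (hy : y ∈ (P u v).support)
    (he : e ∈ (P x y).edges) : e ∈ (P u v).edges :=
  List.mem_toFinset.mp (hcons u v x y hx hy (List.mem_toFinset.mpr he))

lemma mk_mem_edges_of_mem_support (hpath : ∀ u v : V, (P u v).IsPath)
    (hcons : ∀ u v x y : V, x ∈ (P u v).support → y ∈ (P u v).support →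
      (P x y).edges.toFinset ⊆ (P u v).edges.toFinset)
    {y v a : V} (hx : x ∈ (P y v).support) (hxv : x ≠ v) (he : s(v, a) ∈ (P y v).edges) :
    s(v, a) ∈ (P x v).edges := by
  have hlast : s(v, (P x v).penultimate) ∈ (P x v).edges := by
    rw [Sym2.eq_swap]
    exact mk_penultimate_end_mem_edges (not_nil_of_ne hxv)
  have hlast' : s(v, (P x v).penultimate) ∈ (P y v).edges :=
    mem_edges_of_mem_support hcons hx (end_mem_support _) hlast
  rwa [(hpath y v).eq_penultimate_of_mem_edges he,
    ← (hpath y v).eq_penultimate_of_mem_edges hlast']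

end Paths

lemma walkWeight_append (w : Sym2 V → ℝ) {a b c : V} (p : G.Walk a b) (q : G.Walk b c) :
    walkWeight w (p.append q) = walkWeight w p + walkWeight w q := by
  simp [walkWeight, edges_append]

lemma walkWeight_pos {w : Sym2 V → ℝ} (hw : ∀ e ∈ G.edgeSet, 0 < w e) {a b : V} (hab : a ≠ b)
    (p : G.Walk a b) : 0 < walkWeight w p := by
  cases p with
  | nil => exact absurd rfl hab
  | cons h q =>
    refine List.sum_pos _ (fun _ hx => ?_) (by simp)
    obtain ⟨e, he, rfl⟩ := List.mem_map.mp hx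
    exact hw e ((cons h q).edges_subset_edgeSet he)

lemma walkWeight_comm (w : Sym2 V → ℝ) (hpath : ∀ u v : V, (P u v).IsPath)
    (hsymm : ∀ u v : V, (P u v).edges.toFinset = (P v u).edges.toFinset) (x y : V) :
    walkWeight w (P x y) = walkWeight w (P y x) :=
  ((List.perm_of_nodup_nodup_toFinset_eq (hpath x y).edges_nodup (hpath y x).edges_nodup
    (hsymm x y)).map w).sum_eq

lemma walkWeight_add_of_mem_support {w : Sym2 V → ℝ}
    (hshort : ∀ (u v : V) (q : G.Walk u v), walkWeight w (P u v) ≤ walkWeight w q)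
    {x y z : V} (hy : y ∈ (P x z).support) :
    walkWeight w (P x y) + walkWeight w (P y z) = walkWeight w (P x z) := by
  have hsplit : walkWeight w ((P x z).takeUntil y hy) + walkWeight w ((P x z).dropUntil y hy)
      = walkWeight w (P x z) := by
    rw [← walkWeight_append, take_spec]
  have := hshort x y ((P x z).takeUntil y hy)
  have := hshort y z ((P x z).dropUntil y hy)
  have := hshort x z ((P x y).append (P y z))
  rw [walkWeight_append] at this
  linarith

lemma eq_of_mem_support_of_mem_support {w : Sym2 V → ℝ} (hw : ∀ e ∈ G.edgeSet, 0 < w e)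
    (hpath : ∀ u v : V, (P u v).IsPath)
    (hshort : ∀ (u v : V) (q : G.Walk u v), walkWeight w (P u v) ≤ walkWeight w q)
    (hsymm : ∀ u v : V, (P u v).edges.toFinset = (P v u).edges.toFinset)
    {x y z : V} (hy : y ∈ (P x z).support) (hx : x ∈ (P y z).support) : x = y := by
  by_contra hxy
  have := walkWeight_add_of_mem_support hshort hy
  have := walkWeight_add_of_mem_support hshort hx
  have := walkWeight_comm w hpath hsymm x y
  have := walkWeight_pos hw hxy (P x y)
  linarith

section Reversal

variable {x u v : V}

lemma validRep_rule1_reverse (hpath : ∀ u v : V, (P u v).IsPath)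
    (hsymm : ∀ u v : V, (P u v).edges.toFinset = (P v u).edges.toFinset)
    (h : ValidRep G P u u v) : ValidRep G P v v u := by
  obtain ⟨hadj, -, hv, -⟩ := h
  refine ⟨hadj.symm, by simp [self_eq_nil hpath], fun hmem => hv ?_,
    fun hvv _ => absurd rfl hvv⟩
  rw [Sym2.eq_swap] at hmem
  exact (mem_edges_comm hsymm).mp hmem

lemma validRep_rule2a_reverse {w : Sym2 V → ℝ} (hw : ∀ e ∈ G.edgeSet, 0 < w e)
    (hpath : ∀ u v : V, (P u v).IsPath)
    (hshort : ∀ (u v : V) (q : G.Walk u v), walkWeight w (P u v) ≤ walkWeight w q)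
    (hsymm : ∀ u v : V, (P u v).edges.toFinset = (P v u).edges.toFinset)
    (hcons : ∀ u v x y : V, x ∈ (P u v).support → y ∈ (P u v).support →
      (P x y).edges.toFinset ⊆ (P u v).edges.toFinset)
    (hxu : x ≠ u) (h : ValidRep G P x u v) (h2 : x = sfun G P (sfun G P x u) v) :
    sfun G P x u ≠ v ∧ ValidRep G P (sfun G P x u) v u := by
  obtain ⟨hadj, hu, hv, -⟩ := h
  have hx'_mem : sfun G P x u ∈ (P x u).support := sfun_mem_support
  have hx'_edge : s(x, sfun G P x u) ∈ (P x u).edges := mk_sfun_mem_edges hxu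
  have hx'x : sfun G P x u ≠ x := (adj_sfun hxu).ne'
  generalize sfun G P x u = x' at *
  refine ⟨?_, hadj.symm, fun hmem => ?_, fun hmem => hu ?_, fun _ _ heq => ?_⟩
  · rintro rfl
    exact hx'x (h2.trans (sfun_self hpath x')).symm
  · by_cases hxv : x = v
    · -- `u` and `x'` are both the penultimate vertex of `P x' x`
      rw [← hxv] at h2 hmem hu
      have hlast := mk_sfun_mem_edges (P := P) hx'x
      rw [← h2, Sym2.eq_swap] at hlast
      have hux' : u = x' :=
        ((hpath x' x).eq_penultimate_of_mem_edges hmem).trans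
          ((hpath x' x).eq_penultimate_of_mem_edges hlast).symm
      have hedge : s(u, x) = s(x, x') := by rw [hux', Sym2.eq_swap]
      exact hu (hedge ▸ hx'_edge)
    · have hx_mem := sfun_mem_support (P := P) (x := x') (u := v)
      rw [← h2] at hx_mem
      exact hv (Sym2.eq_swap ▸ mk_mem_edges_of_mem_support hpath hcons hx_mem hxv hmem)
  · rw [Sym2.eq_swap] at hmem
    exact mem_edges_of_mem_support hcons hx'_mem (end_mem_support _) hmem
  · have hx_mem := sfun_mem_support (P := P) (x := x') (u := u)
    rw [← heq, ← h2] at hx_mem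
    exact hx'x (eq_of_mem_support_of_mem_support hw hpath hshort hsymm hx'_mem hx_mem).symm

lemma validRep_rule2b_reverse (hpath : ∀ u v : V, (P u v).IsPath)
    (hsymm : ∀ u v : V, (P u v).edges.toFinset = (P v u).edges.toFinset)
    (hxu : x ≠ u) (h : ValidRep G P x u v) (h2 : x ≠ sfun G P (sfun G P x u) v)
    (h3 : u = sfun G P v (sfun G P x u)) :
    v ≠ sfun G P x u ∧ ValidRep G P v (sfun G P x u) x ∧ v ≠ sfun G P u x := by
  obtain ⟨hadj, hu, hv, hsplit⟩ := h
  refine ⟨fun hvx' => hadj.ne ?_,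
    ⟨(adj_sfun hxu).symm, fun hmem => h2 ?_, fun hmem => ?_, fun _ hvx heq => hv ?_⟩,
    fun hvu => hu ?_⟩
  · rw [h3, ← hvx', sfun_self hpath]
  · exact (hpath _ v).eq_snd_of_mem_edges ((mem_edges_comm hsymm).mp hmem)
  · have hxv : x ≠ v := by
      rintro rfl
      simp [self_eq_nil hpath] at hmem
    rw [mem_edges_comm hsymm, Sym2.eq_swap] at hmem
    exact hsplit hxu hxv ((hpath x v).eq_snd_of_mem_edges hmem)
  · rw [mem_edges_comm hsymm, Sym2.eq_swap, h3, heq]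
    exact mk_sfun_mem_edges hvx
  · rw [mem_edges_comm hsymm, hvu]
    exact mk_sfun_mem_edges hxu.symm

end Reversal

theorem _root_.Arc0.reverse {w : Sym2 V → ℝ} (hw : ∀ e ∈ G.edgeSet, 0 < w e)
    (hpath : ∀ u v : V, (P u v).IsPath)
    (hshort : ∀ (u v : V) (q : G.Walk u v), walkWeight w (P u v) ≤ walkWeight w q)
    (hsymm : ∀ u v : V, (P u v).edges.toFinset = (P v u).edges.toFinset)
    (hcons : ∀ u v x y : V, x ∈ (P u v).support → y ∈ (P u v).support →
      (P x y).edges.toFinset ⊆ (P u v).edges.toFinset)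
    {a b : V × V × V} (h : Arc0 G P a b) :
    Arc0 G P (b.1, b.2.2, b.2.1) (a.1, a.2.2, a.2.1) := by
  cases h with
  | rule1 u v hval => exact .rule1 v u (validRep_rule1_reverse hpath hsymm hval)
  | rule2a x u v hxu hval h2 =>
    obtain ⟨hne, hval'⟩ := validRep_rule2a_reverse hw hpath hshort hsymm hcons hxu hval h2
    have harc := Arc0.rule2a (sfun G P x u) v u hne hval' (by rw [← h2])
    rwa [← h2] at harc
  | rule2b x u v hxu hval h2 h3 =>
    obtain ⟨hne, hval', hne'⟩ := validRep_rule2b_reverse hpath hsymm hxu hval h2 h3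
    have harc := Arc0.rule2b v (sfun G P x u) x hne hval' (by rwa [← h3]) (by rw [← h3])
    rwa [← h3] at harc

end ExchangeGraph

theorem exchange_graph_arcs_mutual (w : Sym2 V → ℝ)
    (hw : ∀ e ∈ G.edgeSet, 0 < w e)
    (hpath : ∀ u v : V, (P u v).IsPath)
    (hshort : ∀ (u v : V) (q : G.Walk u v), walkWeight w (P u v) ≤ walkWeight w q)
    (hsymm : ∀ u v : V, (P u v).edges.toFinset = (P v u).edges.toFinset)
    (hcons : ∀ u v x y : V, x ∈ (P u v).support → y ∈ (P u v).support →
      (P x y).edges.toFinset ⊆ (P u v).edges.toFinset)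
    (r r' : V × Sym2 V) (h : Arc G P r r') : Arc G P r' r := by
  obtain ⟨u, v, s, t, hr, hr', harc⟩ := h
  exact ⟨t, s, v, u, hr'.trans Sym2.eq_swap, hr.trans Sym2.eq_swap,
    harc.reverse hw hpath hshort hsymm hcons⟩
end
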